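/- Under the same assumptions, for l ≠ k the between-task influence satisfies ∂θ̂_k/∂σ_{li} = -H_{kk}^{-1} H_{k,K+1} · ∂γ̂/∂σ_{li}; in particular, if the cross block H_{k,K+1} = 0, then data from task l has zero first-order influence on task k's parameters. -/

import Mathlib

open Matrix

/-- The arrowhead block Hessian of the multitask objective at the minimizer. -/
def arrowheadMatrix {K p : ℕ} {d : Fin K → ℕ}
    (Hd : ∀ k, Matrix (Fin (d k)) (Fin (d k)) ℝ)
    (Hr : ∀ k, Matrix (Fin (d k)) (Fin p) ℝ)
    (Hc : ∀ k, Matrix (Fin p) (Fin (d k)) ℝ)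
    (Hcorner : Matrix (Fin p) (Fin p) ℝ) :
    Matrix ((Σ k, Fin (d k)) ⊕ Fin p) ((Σ k, Fin (d k)) ⊕ Fin p) ℝ :=
  Matrix.fromBlocks (Matrix.blockDiagonal' Hd)
    (Matrix.of fun x j => Hr x.1 x.2 j)
    (Matrix.of fun j x => Hc x.1 j x.2)
    Hcorner

/-
Row block `k` of `H v = -g` reads `H_{kk} θ_k + H_{k,K+1} γ = 0`, because `g` vanishes on block `k`
(`ℓ_{li}` does not depend on `θ_k` for `k ≠ l`); multiplying by `H_{kk}⁻¹` gives the formula.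
-/

namespace Matrix

theorem blockDiagonal'_mulVec_apply {o : Type*} {m : o → Type*} {α : Type*} [Fintype o]
    [DecidableEq o] [∀ k, Fintype (m k)] [NonUnitalNonAssocSemiring α]
    (M : ∀ k, Matrix (m k) (m k) α) (u : (Σ k, m k) → α) (k : o) (i : m k) :
    (blockDiagonal' M *ᵥ u) ⟨k, i⟩ = (M k *ᵥ fun x => u ⟨k, x⟩) i := by
  simp only [mulVec, dotProduct]
  rw [← Finset.univ_sigma_univ, Finset.sum_sigma, Fintype.sum_eq_single k]
  · simp [blockDiagonal'_apply]
  · intro j hj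
    simp [blockDiagonal'_apply, Ne.symm hj]

theorem eq_neg_inv_mul_mulVec_of_mulVec_add_mulVec_eq_zero {m n α : Type*} [Fintype m]
    [DecidableEq m] [Fintype n] [CommRing α] {A : Matrix m m α} {B : Matrix m n α}
    (hA : IsUnit A) {x : m → α} {y : n → α} (h : A *ᵥ x + B *ᵥ y = 0) :
    x = -((A⁻¹ * B) *ᵥ y) := by
  have hdet : IsUnit A.det := (isUnit_iff_isUnit_det A).mp hA
  calc x = A⁻¹ *ᵥ (A *ᵥ x) := by rw [mulVec_mulVec, nonsing_inv_mul A hdet, one_mulVec]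
    _ = A⁻¹ *ᵥ -(B *ᵥ y) := by rw [eq_neg_of_add_eq_zero_left h]
    _ = -((A⁻¹ * B) *ᵥ y) := by rw [mulVec_neg, mulVec_mulVec]

end Matrix

theorem arrowheadMatrix_mulVec_inl {K p : ℕ} {d : Fin K → ℕ}
    (Hd : ∀ k, Matrix (Fin (d k)) (Fin (d k)) ℝ)
    (Hr : ∀ k, Matrix (Fin (d k)) (Fin p) ℝ)
    (Hc : ∀ k, Matrix (Fin p) (Fin (d k)) ℝ)
    (Hcorner : Matrix (Fin p) (Fin p) ℝ)
    (v : ((Σ j, Fin (d j)) ⊕ Fin p) → ℝ) (k : Fin K) (i : Fin (d k)) :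
    (arrowheadMatrix Hd Hr Hc Hcorner *ᵥ v) (Sum.inl ⟨k, i⟩) =
      (Hd k *ᵥ (fun x => v (Sum.inl ⟨k, x⟩)) + Hr k *ᵥ (fun j => v (Sum.inr j))) i := by
  rw [← Sum.elim_comp_inl_inr v, arrowheadMatrix, fromBlocks_mulVec]
  exact congrArg₂ (· + ·) (blockDiagonal'_mulVec_apply Hd _ k i) rfl

theorem stmt_11_general {K p : ℕ} {d : Fin K → ℕ}
    (Hd : ∀ k, Matrix (Fin (d k)) (Fin (d k)) ℝ)
    (Hr : ∀ k, Matrix (Fin (d k)) (Fin p) ℝ)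
    (Hc : ∀ k, Matrix (Fin p) (Fin (d k)) ℝ)
    (Hcorner : Matrix (Fin p) (Fin p) ℝ)
    (hd : ∀ k, IsUnit (Hd k))
    (k l : Fin K) (hkl : l ≠ k)
    -- gradients ∂ℓ_{li}/∂θ_l and ∂ℓ_{li}/∂γ of the loss of the (l,i)-th point at ŵ
    (gθ : Fin (d l) → ℝ) (gγ : Fin p → ℝ)
    (v : ((Σ j, Fin (d j)) ⊕ Fin p) → ℝ)
    -- differentiated stationarity condition (implicit function theorem): H v = -g
    (hv : (arrowheadMatrix Hd Hr Hc Hcorner) *ᵥ v =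
      -(Sum.elim
          (fun x : Σ j, Fin (d j) =>
            if h : x.1 = l then gθ (Fin.cast (congrArg d h) x.2) else 0)
          gγ)) :
    (fun i => v (Sum.inl ⟨k, i⟩)) =
        -(((Hd k)⁻¹ * Hr k) *ᵥ (fun j => v (Sum.inr j))) ∧
      (Hr k = 0 → (fun i => v (Sum.inl ⟨k, i⟩)) = 0) := by
  have row_k : Hd k *ᵥ (fun x => v (Sum.inl ⟨k, x⟩)) + Hr k *ᵥ (fun j => v (Sum.inr j)) = 0 := by
    funext i
    rw [← arrowheadMatrix_mulVec_inl, hv]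
    simp [hkl.symm]
  have hθk := eq_neg_inv_mul_mulVec_of_mulVec_add_mulVec_eq_zero (hd k) row_k
  refine ⟨hθk, fun hr0 => ?_⟩
  rw [hθk, hr0, Matrix.mul_zero, zero_mulVec, neg_zero]

/-- Between-task influence (Proposition 3.1, Eq. (8)). With `v = ∂ŵ/∂σ_{li}` the
derivative of the minimizer of the σ-weighted multitask objective in the weight
`σ_{li}` of the `i`-th point of task `l ≠ k`, solving (by the implicit function
theorem) `H v = -g` where `g` has the gradients of `ℓ_{li}` in block `l` and the
shared block (and zero in block `k`, since `ℓ_{li}` does not depend on `θ_k`),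
the task-`k` block of `v` satisfies
`∂θ̂_k/∂σ_{li} = -H_{kk}⁻¹ H_{k,K+1} ∂γ̂/∂σ_{li}`; in particular, if the cross
block `H_{k,K+1} = 0`, then data from task `l` has zero first-order influence on
task `k`'s parameters. -/
theorem stmt_11 {K p : ℕ} {d : Fin K → ℕ}
    (Hd : ∀ k, Matrix (Fin (d k)) (Fin (d k)) ℝ)
    (Hr : ∀ k, Matrix (Fin (d k)) (Fin p) ℝ)
    (Hc : ∀ k, Matrix (Fin p) (Fin (d k)) ℝ)
    (Hcorner : Matrix (Fin p) (Fin p) ℝ)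
    (hd : ∀ k, IsUnit (Hd k))
    (N : Matrix (Fin p) (Fin p) ℝ)
    (hNdef : N = Hcorner - ∑ j, Hc j * (Hd j)⁻¹ * Hr j)
    (hN : IsUnit N)
    (k l : Fin K) (hkl : l ≠ k)
    -- gradients ∂ℓ_{li}/∂θ_l and ∂ℓ_{li}/∂γ of the loss of the (l,i)-th point at ŵ
    (gθ : Fin (d l) → ℝ) (gγ : Fin p → ℝ)
    -- ŵ as a function of the weight σ_{li}, with derivative v at σ_{li} = 1
    (what : ℝ → (((Σ j, Fin (d j)) ⊕ Fin p) → ℝ))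
    (v : ((Σ j, Fin (d j)) ⊕ Fin p) → ℝ)
    (hderiv : HasDerivAt what v 1)
    -- differentiated stationarity condition (implicit function theorem): H v = -g
    (hv : (arrowheadMatrix Hd Hr Hc Hcorner) *ᵥ v =
      -(Sum.elim
          (fun x : Σ j, Fin (d j) =>
            if h : x.1 = l then gθ (Fin.cast (congrArg d h) x.2) else 0)
          gγ)) :
    (fun i => v (Sum.inl ⟨k, i⟩)) =
        -(((Hd k)⁻¹ * Hr k) *ᵥ (fun j => v (Sum.inr j))) ∧
      (Hr k = 0 → (fun i => v (Sum.inl ⟨k, i⟩)) = 0) :=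
  stmt_11_general Hd Hr Hc Hcorner hd k l hkl gθ gγ v hv
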